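/- Let Z be an integrable real random variable with cdf F(z) = P[Z ≤ z] and finite essential supremum, let Z_1,…,Z_{n−1} be iid with the same law as Z, set Z_n := esssup Z, let Z_(1) ≤ ⋯ ≤ Z_(n) be the order statistics of Z_1,…,Z_n, and define the coverages W_i = F(Z_(i)) − F(Z_(i−1)) with F(Z_(0)) := 0. Then almost surely E[Z] ≤ ∑_{i=1}^n Z_(i) W_i. -/

import Mathlib

open MeasureTheory ProbabilityTheory

/-- Increasing rearrangement (order statistics) of a finite tuple. -/
noncomputable def sortedVec {α : Type*} [LinearOrder α] {n : ℕ} (z : Fin n → α) : Fin n → α :=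
  z ∘ Tuple.sort z

/-- The coverage `F(z_i) - F(z_{i-1})`, with the convention `F(z_0) := 0`. -/
noncomputable def coverage {n : ℕ} (F : ℝ → ℝ) (z : Fin n → ℝ) (i : Fin n) : ℝ :=
  F (z i) - (if h : 0 < (i : ℕ) then F (z ⟨(i : ℕ) - 1, by have := i.isLt; omega⟩) else 0)

/-- The full sample vector `(Z_1, …, Z_{n-1}, M)`. -/
def fullVec {Ω : Type*} {n : ℕ} (Zs : Fin (n - 1) → Ω → ℝ) (M : ℝ) (i : Fin n) (ω : Ω) : ℝ :=
  if h : (i : ℕ) < n - 1 then Zs ⟨(i : ℕ), h⟩ ω else M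

/-!
The bound holds for every sample, not only almost surely. Since `M` is one of the sample
values, the largest order statistic `z_n` bounds `Z` almost surely, so `E[Z]` is the integral
of `Z` over `{Z ≤ z_n}`. Splitting this set into the slabs `{z_{i-1} < Z ≤ z_i}` and bounding
`Z` by `z_i` on the `i`-th slab, whose probability is the coverage `W_i`, gives `∑ z_i W_i`.
-/

open Set

lemma le_sortedVec_last {α : Type*} [LinearOrder α] {n : ℕ} (z : Fin (n + 1) → α)
    (i : Fin (n + 1)) : z i ≤ sortedVec z (Fin.last n) := by
  have hi : sortedVec z ((Tuple.sort z).symm i) = z i := by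
    simp [sortedVec]
  exact hi ▸ Tuple.monotone_sort z (Fin.le_last _)

lemma coverage_zero {n : ℕ} (F : ℝ → ℝ) (z : Fin (n + 1) → ℝ) : coverage F z 0 = F (z 0) := by
  simp [coverage]

lemma coverage_castSucc {n : ℕ} (F : ℝ → ℝ) (z : Fin (n + 1) → ℝ) (i : Fin n) :
    coverage F z i.castSucc = coverage F (z ∘ Fin.castSucc) i := by
  simp only [coverage, Fin.val_castSucc, Function.comp_apply]
  rfl

lemma coverage_last {n : ℕ} (F : ℝ → ℝ) (z : Fin (n + 2) → ℝ) :
    coverage F z (Fin.last (n + 1)) = F (z (Fin.last (n + 1))) - F (z (Fin.last n).castSucc) := by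
  simp [coverage]
  rfl

section CoverageBound

variable {Ω : Type*} [MeasurableSpace Ω] {P : Measure Ω} [IsFiniteMeasure P] {Z : Ω → ℝ}

lemma setIntegral_preimage_le_mul_measureReal (hZ : Integrable Z P) {s : Set ℝ}
    (hs : MeasurableSet (Z ⁻¹' s)) {b : ℝ} (hsb : s ⊆ Iic b) :
    ∫ x in Z ⁻¹' s, Z x ∂P ≤ b * P.real (Z ⁻¹' s) :=
  calc ∫ x in Z ⁻¹' s, Z x ∂P ≤ ∫ _ in Z ⁻¹' s, b ∂P :=
        setIntegral_mono_on hZ.integrableOn (integrableOn_const (measure_ne_top _ _)) hs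
          fun _ hx => hsb hx
    _ = b * P.real (Z ⁻¹' s) := by rw [setIntegral_const, smul_eq_mul, mul_comm]

lemma setIntegral_le_sum_mul_coverage (hZm : Measurable Z) (hZ : Integrable Z P) :
    ∀ {n : ℕ} (z : Fin (n + 1) → ℝ), Monotone z →
      ∫ x in Z ⁻¹' Iic (z (Fin.last n)), Z x ∂P ≤
        ∑ i, z i * coverage (fun t => P.real (Z ⁻¹' Iic t)) z i
  | 0, z, _ => by
    simpa [coverage_zero] using
      setIntegral_preimage_le_mul_measureReal hZ (hZm measurableSet_Iic) subset_rfl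
  | n + 1, z, hz => by
    set a := z (Fin.last n).castSucc
    set b := z (Fin.last (n + 1))
    have hab : a ≤ b := hz (Fin.castSucc_lt_last _).le
    have hsplit : Z ⁻¹' Iic b = Z ⁻¹' Iic a ∪ Z ⁻¹' Ioc a b := by
      rw [← preimage_union, Iic_union_Ioc_eq_Iic hab]
    have hdisj : Disjoint (Z ⁻¹' Iic a) (Z ⁻¹' Ioc a b) :=
      (Iic_disjoint_Ioc le_rfl).preimage Z
    have hmeasure : P.real (Z ⁻¹' Iic b) = P.real (Z ⁻¹' Iic a) + P.real (Z ⁻¹' Ioc a b) := by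
      rw [hsplit, measureReal_union hdisj (hZm measurableSet_Ioc)]
    have hlow := setIntegral_le_sum_mul_coverage hZm hZ (z ∘ Fin.castSucc)
      (hz.comp Fin.strictMono_castSucc.monotone)
    have hslab := setIntegral_preimage_le_mul_measureReal (P := P) hZ
      (hZm measurableSet_Ioc) (Ioc_subset_Iic_self (a := a) (b := b))
    rw [hsplit, setIntegral_union hdisj (hZm measurableSet_Ioc) hZ.integrableOn hZ.integrableOn,
      Fin.sum_univ_castSucc, coverage_last, hmeasure, add_sub_cancel_left]
    simp only [coverage_castSucc]
    exact add_le_add hlow hslab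

end CoverageBound

theorem mean_le_sum_orderStat_mul_coverage_general
    {Ω : Type*} [MeasurableSpace Ω] (P : Measure Ω) [IsProbabilityMeasure P]
    (n : ℕ) (hn : 1 ≤ n)
    (Z : Ω → ℝ) (hZmeas : Measurable Z) (hZint : Integrable Z P)
    (M : ℝ) (hM_ub : ∀ᵐ ω ∂P, Z ω ≤ M)
    (Zs : Fin (n - 1) → Ω → ℝ)
    (F : ℝ → ℝ) (hF : F = fun t => (P {ω | Z ω ≤ t}).toReal) :
    ∀ᵐ ω ∂P, (∫ x, Z x ∂P) ≤
      ∑ i, sortedVec (fun j => fullVec Zs M j ω) i *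
        coverage F (sortedVec fun j => fullVec Zs M j ω) i := by
  obtain ⟨m, rfl⟩ : ∃ m, n = m + 1 := ⟨n - 1, by omega⟩
  subst hF
  refine Filter.Eventually.of_forall fun ω => ?_
  set z := sortedVec fun j => fullVec Zs M j ω
  have hMz : M ≤ z (Fin.last m) := by
    have hlast : fullVec Zs M (Fin.last m) ω = M := by simp [fullVec]
    exact hlast ▸ le_sortedVec_last (fun j => fullVec Zs M j ω) (Fin.last m)
  have hZz : ∀ᵐ x ∂P, x ∈ Z ⁻¹' Iic (z (Fin.last m)) :=
    hM_ub.mono fun _ hx => hx.trans hMz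
  calc ∫ x, Z x ∂P = ∫ x in Z ⁻¹' Iic (z (Fin.last m)), Z x ∂P := by
        rw [Measure.restrict_eq_self_of_ae_mem hZz]
    _ ≤ _ := setIntegral_le_sum_mul_coverage hZmeas hZint z (Tuple.monotone_sort _)

/-- with `Z_(1) ≤ ⋯ ≤ Z_(n)` the order statistics of iid copies
`Z_1, …, Z_{n-1}` of `Z` together with `Z_n := esssup Z`, and `W` the coverage vector
`W_i = F(Z_(i)) - F(Z_(i-1))` (with `F(Z_(0)) := 0`), almost surely
`E[Z] ≤ ∑_{i=1}^n Z_(i) W_i`. -/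
theorem mean_le_sum_orderStat_mul_coverage
    {Ω : Type*} [MeasurableSpace Ω] (P : Measure Ω) [IsProbabilityMeasure P]
    (n : ℕ) (hn : 1 ≤ n)
    (Z : Ω → ℝ) (hZmeas : Measurable Z) (hZint : Integrable Z P)
    (M : ℝ) (hM_ub : ∀ᵐ ω ∂P, Z ω ≤ M) (hM_least : ∀ c : ℝ, (∀ᵐ ω ∂P, Z ω ≤ c) → M ≤ c)
    (Zs : Fin (n - 1) → Ω → ℝ) (hZs_meas : ∀ i, Measurable (Zs i))
    (hZs_indep : iIndepFun Zs P)
    (hZs_law : ∀ i, Measure.map (Zs i) P = Measure.map Z P)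
    (F : ℝ → ℝ) (hF : F = fun t => (P {ω | Z ω ≤ t}).toReal) :
    ∀ᵐ ω ∂P, (∫ x, Z x ∂P) ≤
      ∑ i, sortedVec (fun j => fullVec Zs M j ω) i *
        coverage F (sortedVec fun j => fullVec Zs M j ω) i :=
  mean_le_sum_orderStat_mul_coverage_general P n hn Z hZmeas hZint M hM_ub Zs F hF
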